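/- A metric uncertainty relation yields a locking scheme: if {U₀,…,U_{t−1}} on A⊗B (with d_A = 2^n) satisfies an ε-metric uncertainty relation on A, then the encoding E(x,k) = (1/d_B) Σ_{b∈[d_B]} U_k† (|x⟩⟨x|^A ⊗ |b⟩⟨b|^B) U_k is ε-locking: (i) distinct messages encode to perfectly distinguishable states (trace distance 1) for the same key, and (ii) for X uniform on [2^n], K uniform on [t] independent of X, and any rank-one POVM measurement on A⊗B with outcome I, the conditional distribution of X given I = i is within total variation distance ε of uniform for every outcome i. -/

import Mathlib

/-!
For each outcome `i` and message `x`, `P(I = i, X = x)` is proportional to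
`(1/t) Σ_k p^A_{U_k|e_i⟩}(x)`; since each `U_k` is unitary and `e_i` a unit vector, every
`p^A_{U_k|e_i⟩}` is a probability distribution, so the normalising constant cancels and the
posterior of `X` given `I = i` is the key-average of these distributions. Total variation distance
to the uniform distribution is convex, so it is at most the average in the metric uncertainty
relation, i.e. at most `ε`.

For distinguishability, `E(x,k) - E(x',k) = U_kᴴ D U_k` with `D` diagonal with entries
`±1/d_B` on the `2 d_B` basis vectors `|x,b⟩`, `|x',b⟩` and `0` elsewhere; its absolute value is
`U_kᴴ |D| U_k`, of trace `2`.
-/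

open Matrix
open scoped BigOperators ComplexOrder

/-- The positive semidefinite square root of a positive semidefinite matrix
(the definition `Matrix.PosSemidef.sqrt` of the older Mathlib, since removed). -/
noncomputable def Matrix.PosSemidef.sqrt {n 𝕜 : Type*} [Fintype n] [DecidableEq n] [RCLike 𝕜]
    {A : Matrix n n 𝕜} (hA : A.PosSemidef) : Matrix n n 𝕜 :=
  hA.1.eigenvectorUnitary.1 * diagonal ((↑) ∘ (√·) ∘ hA.1.eigenvalues) *
    (star hA.1.eigenvectorUnitary : Matrix n n 𝕜)

/-- The locking encoding `E(x,k) = (1/d_B) Σ_b U_k† (|x⟩⟨x| ⊗ |b⟩⟨b|) U_k`. -/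
noncomputable def lockEnc (dA dB t : ℕ)
    (U : Fin t → Matrix (Fin dA × Fin dB) (Fin dA × Fin dB) ℂ)
    (x : Fin dA) (k : Fin t) : Matrix (Fin dA × Fin dB) (Fin dA × Fin dB) ℂ :=
  (((dB : ℝ)⁻¹ : ℝ) : ℂ) •
    ∑ b : Fin dB, (U k)ᴴ * Matrix.single (x, b) (x, b) (1 : ℂ) * U k

/-- The joint probability `P(I = i, X = x)` of message `x` (uniform on `[d_A]`) and
outcome `i` of the rank-one POVM `{ξ_i |e_i⟩⟨e_i|}` applied to `E(X, K)` with the key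
`K` uniform on `[t]`. -/
noncomputable def lockProb (dA dB t m : ℕ)
    (U : Fin t → Matrix (Fin dA × Fin dB) (Fin dA × Fin dB) ℂ)
    (ξ : Fin m → ℝ) (e : Fin m → EuclideanSpace ℂ (Fin dA × Fin dB))
    (i : Fin m) (x : Fin dA) : ℝ :=
  (1 / ((dA : ℝ) * t)) * ∑ k,
    ((((ξ i : ℝ) : ℂ) • Matrix.vecMulVec (e i) (fun p => (starRingEnd ℂ) (e i p)) *
        lockEnc dA dB t U x k).trace).re

namespace Matrix

variable {N : Type*} [Fintype N]

lemma trace_vecMulVec_star_mul (v : N → ℂ) (M : Matrix N N ℂ) :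
    (vecMulVec v (fun p => (starRingEnd ℂ) (v p)) * M).trace = star v ⬝ᵥ M *ᵥ v := by
  rw [vecMulVec_mul, trace_vecMulVec, dotProduct_comm, dotProduct_mulVec]
  rfl

variable [DecidableEq N]

lemma PosSemidef.sqrt_eq_of_sq_eq {𝕜 : Type*} [RCLike 𝕜] {A S : Matrix N N 𝕜}
    (hA : A.PosSemidef) (hS : S.PosSemidef) (hSA : S ^ 2 = A) : hA.sqrt = S := by
  have hcfc : hA.sqrt = hA.1.cfc Real.sqrt := by
    simp [sqrt, IsHermitian.cfc, Unitary.conjStarAlgAut_apply]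
  have hsqrt_sq : cfc (fun r : ℝ => √(r ^ 2)) S = cfc Real.sqrt A :=
    hSA ▸ cfc_comp_pow Real.sqrt 2 S Real.continuous_sqrt.continuousOn hS.1
  rw [hcfc, ← hA.1.cfc_eq, ← hsqrt_sq]
  conv_rhs => rw [← cfc_id' ℝ S hS.1]
  refine cfc_congr fun r hr => ?_
  rw [hS.1.spectrum_real_eq_range_eigenvalues] at hr
  obtain ⟨j, rfl⟩ := hr
  exact Real.sqrt_sq (hS.eigenvalues_nonneg j)

lemma star_dotProduct_conj_diagonal_mulVec (V : Matrix N N ℂ) (w : N → ℝ) (v : N → ℂ) :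
    star v ⬝ᵥ (Vᴴ * diagonal (fun p => (w p : ℂ)) * V) *ᵥ v
      = ((∑ p, w p * ‖(V *ᵥ v) p‖ ^ 2 : ℝ) : ℂ) := by
  rw [← mulVec_mulVec, ← mulVec_mulVec, dotProduct_mulVec, ← star_mulVec]
  push_cast
  refine Finset.sum_congr rfl fun p _ => ?_
  rw [mulVec_diagonal, Pi.star_apply, Complex.star_def, mul_left_comm, Complex.conj_mul']

lemma sum_norm_sq_mulVec_of_mem_unitaryGroup {V : Matrix N N ℂ} (hV : V ∈ unitaryGroup N ℂ)
    (v : N → ℂ) : ∑ p, ‖(V *ᵥ v) p‖ ^ 2 = ∑ p, ‖v p‖ ^ 2 := by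
  have hVV : Vᴴ * V = 1 := mem_unitaryGroup_iff'.mp hV
  have hV' := star_dotProduct_conj_diagonal_mulVec V (fun _ => 1) v
  have h1 := star_dotProduct_conj_diagonal_mulVec 1 (fun _ => 1) v
  simp only [Complex.ofReal_one, diagonal_one, Matrix.mul_one, hVV, conjTranspose_one,
    one_mulVec, one_mul] at hV' h1
  exact_mod_cast hV'.symm.trans h1

lemma conj_diagonal_sq_of_mem_unitaryGroup {V : Matrix N N ℂ} (hV : V ∈ unitaryGroup N ℂ)
    (g : N → ℂ) : (Vᴴ * diagonal g * V) ^ 2 = Vᴴ * diagonal (g ^ 2) * V := by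
  calc (Vᴴ * diagonal g * V) ^ 2 = Vᴴ * diagonal g * (V * Vᴴ) * diagonal g * V := by
        simp only [pow_two, Matrix.mul_assoc]
    _ = Vᴴ * (diagonal g * diagonal g) * V := by
        rw [show V * Vᴴ = 1 from mem_unitaryGroup_iff.mp hV]
        simp only [Matrix.mul_one, Matrix.mul_assoc]
    _ = Vᴴ * diagonal (g ^ 2) * V := by rw [diagonal_mul_diagonal, pow_two]; rfl

lemma trace_sqrt_sq_eq_sum_abs {D V : Matrix N N ℂ} (hV : V ∈ unitaryGroup N ℂ) {g : N → ℝ}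
    (hD : D = Vᴴ * diagonal (fun p => (g p : ℂ)) * V) (h : (D ^ 2).PosSemidef) :
    h.sqrt.trace = ((∑ p, |g p| : ℝ) : ℂ) := by
  subst hD
  push_cast
  set S := Vᴴ * diagonal (fun p => ((|g p| : ℝ) : ℂ)) * V
  have hS : S.PosSemidef :=
    (posSemidef_diagonal_iff.mpr fun p => by simp [abs_nonneg]).conjTranspose_mul_mul_same V
  have hSsq : S ^ 2 = (Vᴴ * diagonal (fun p => (g p : ℂ)) * V) ^ 2 := by
    simp only [S, conj_diagonal_sq_of_mem_unitaryGroup hV]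
    congr 3
    ext p
    simp [← Complex.ofReal_pow]
  rw [PosSemidef.sqrt_eq_of_sq_eq h hS hSsq, trace_mul_cycle,
    show V * Vᴴ = 1 from mem_unitaryGroup_iff.mp hV,
    Matrix.one_mul, trace_diagonal]

end Matrix

lemma Finset.sum_abs_mean_sub_le {κ α : Type*} [Fintype κ] [Fintype α]
    (hκ : Fintype.card κ ≠ 0) (f : κ → α → ℝ) (c : α → ℝ) :
    ∑ a, |(1 / Fintype.card κ : ℝ) * ∑ k, f k a - c a|
      ≤ (1 / Fintype.card κ : ℝ) * ∑ k, ∑ a, |f k a - c a| := by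
  have hmean : ∀ a, (1 / Fintype.card κ : ℝ) * ∑ k, f k a - c a
      = (1 / Fintype.card κ : ℝ) * ∑ k, (f k a - c a) := fun a => by
    rw [Finset.sum_sub_distrib, Finset.sum_const, Finset.card_univ, nsmul_eq_mul]
    field_simp
  simp only [hmean, abs_mul, abs_of_nonneg (by positivity : (0 : ℝ) ≤ 1 / Fintype.card κ),
    ← Finset.mul_sum]
  rw [Finset.sum_comm]
  gcongr
  exact Finset.abs_sum_le_sum_abs _ _

section Locking

variable {dA dB t : ℕ} (U : Fin t → Matrix (Fin dA × Fin dB) (Fin dA × Fin dB) ℂ)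

/-- The paper's `p^A_{V|ψ⟩}`. -/
noncomputable def probA {α β : Type*} [Fintype α] [Fintype β] (V : Matrix (α × β) (α × β) ℂ)
    (ψ : α × β → ℂ) (a : α) : ℝ :=
  ∑ b, ‖(V *ᵥ ψ) (a, b)‖ ^ 2

lemma sum_probA_of_mem_unitaryGroup {α β : Type*} [Fintype α] [Fintype β] [DecidableEq α]
    [DecidableEq β] {V : Matrix (α × β) (α × β) ℂ} (hV : V ∈ unitaryGroup (α × β) ℂ)
    (ψ : α × β → ℂ) : ∑ a, probA V ψ a = ∑ p, ‖ψ p‖ ^ 2 := by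
  rw [← sum_norm_sq_mulVec_of_mem_unitaryGroup hV, Fintype.sum_prod_type]
  rfl

lemma lockEnc_eq_conj_diagonal (x : Fin dA) (k : Fin t) :
    lockEnc dA dB t U x k =
      (U k)ᴴ * diagonal (fun p => ((if p.1 = x then (dB : ℝ)⁻¹ else 0 : ℝ) : ℂ)) * U k := by
  rw [lockEnc, ← Finset.sum_mul, ← Matrix.mul_sum, ← Matrix.smul_mul, ← Matrix.mul_smul]
  congr 2
  rw [← sum_single_eq_diagonal, Fintype.sum_prod_type, Finset.smul_sum]
  simp [Matrix.smul_single, apply_ite]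

lemma lockEnc_sub_lockEnc (x x' : Fin dA) (k : Fin t) :
    lockEnc dA dB t U x k - lockEnc dA dB t U x' k =
      (U k)ᴴ * diagonal (fun p => (((if p.1 = x then (dB : ℝ)⁻¹ else 0) -
        (if p.1 = x' then (dB : ℝ)⁻¹ else 0) : ℝ) : ℂ)) * U k := by
  rw [lockEnc_eq_conj_diagonal, lockEnc_eq_conj_diagonal, ← Matrix.sub_mul, ← Matrix.mul_sub,
    diagonal_sub]
  push_cast
  rfl

lemma sum_abs_ite_sub_ite {α β : Type*} [Fintype α] [Fintype β] [DecidableEq α] {x x' : α}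
    (hxx : x ≠ x') (c : ℝ) :
    ∑ p : α × β, |(if p.1 = x then c else 0) - (if p.1 = x' then c else 0)|
      = 2 * Fintype.card β * |c| := by
  have hsplit : ∀ p : α × β, |(if p.1 = x then c else 0) - (if p.1 = x' then c else 0)|
      = (if p.1 = x then |c| else 0) + (if p.1 = x' then |c| else 0) := by
    intro p
    by_cases h : p.1 = x
    · simp [h, hxx]
    · by_cases h' : p.1 = x' <;> simp [h, h', hxx.symm]
  rw [Finset.sum_congr rfl fun p _ => hsplit p, Finset.sum_add_distrib,
    Fintype.sum_prod_type_right, Fintype.sum_prod_type_right]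
  simp
  ring

lemma lockEnc_traceDist_eq_one (hB : 0 < dB) {k : Fin t}
    (hU : U k ∈ unitaryGroup (Fin dA × Fin dB) ℂ) {x x' : Fin dA} (hxx : x ≠ x')
    (h : ((lockEnc dA dB t U x k - lockEnc dA dB t U x' k) ^ 2).PosSemidef) :
    (1 / 2 : ℂ) * h.sqrt.trace = 1 := by
  rw [trace_sqrt_sq_eq_sum_abs hU (lockEnc_sub_lockEnc U x x' k) h,
    sum_abs_ite_sub_ite hxx, Fintype.card_fin, abs_of_pos (by positivity)]
  have : (dB : ℝ) ≠ 0 := by positivity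
  push_cast
  field_simp

lemma lockProb_eq {m : ℕ} (ξ : Fin m → ℝ) (e : Fin m → EuclideanSpace ℂ (Fin dA × Fin dB))
    (i : Fin m) (x : Fin dA) :
    lockProb dA dB t m U ξ e i x = ξ i / (dA * t * dB) * ∑ k, probA (U k) (e i) x := by
  have hterm : ∀ k, ((((ξ i : ℝ) : ℂ) • vecMulVec (e i) (fun p => (starRingEnd ℂ) (e i p)) *
      lockEnc dA dB t U x k).trace).re = ξ i * (dB : ℝ)⁻¹ * probA (U k) (e i) x := by
    intro k
    rw [Matrix.smul_mul, trace_smul, trace_vecMulVec_star_mul, lockEnc_eq_conj_diagonal,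
      star_dotProduct_conj_diagonal_mulVec, Fintype.sum_prod_type]
    simp [probA, Finset.mul_sum, mul_assoc, -Complex.ofReal_pow]
  rw [lockProb, Finset.sum_congr rfl fun k _ => hterm k, ← Finset.mul_sum]
  ring

end Locking

theorem stmt14 (dA dB t : ℕ) (hB : 0 < dB)
    (ε : ℝ)
    (U : Fin t → Matrix (Fin dA × Fin dB) (Fin dA × Fin dB) ℂ)
    (hU : ∀ k, U k ∈ Matrix.unitaryGroup (Fin dA × Fin dB) ℂ)
    (hMUR : ∀ ψ : EuclideanSpace ℂ (Fin dA × Fin dB), ‖ψ‖ = 1 →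
      (1 / (t : ℝ)) * ∑ k, (1 / 2) * ∑ a : Fin dA,
          |(∑ b : Fin dB, ‖(U k).mulVec ψ (a, b)‖ ^ 2) - 1 / (dA : ℝ)| ≤ ε) :
    -- (i) perfect distinguishability given the key
    (∀ x x' : Fin dA, x ≠ x' → ∀ k,
      ∀ h : ((lockEnc dA dB t U x k - lockEnc dA dB t U x' k) ^ 2).PosSemidef,
        (1 / 2 : ℂ) * h.sqrt.trace = 1) ∧
    -- (ii) locking against any rank-one POVM
    (∀ (m : ℕ) (ξ : Fin m → ℝ) (e : Fin m → EuclideanSpace ℂ (Fin dA × Fin dB)),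
      (∀ i, 0 < ξ i) → (∀ i, ‖e i‖ = 1) →
      (∑ i, ((ξ i : ℝ) : ℂ) •
          Matrix.vecMulVec (e i) (fun p => (starRingEnd ℂ) (e i p)) = 1) →
      ∀ i : Fin m, 0 < ∑ x, lockProb dA dB t m U ξ e i x →
        (1 / 2) * ∑ x : Fin dA,
            |lockProb dA dB t m U ξ e i x / (∑ x', lockProb dA dB t m U ξ e i x')
              - 1 / (dA : ℝ)| ≤ ε) := by
  refine ⟨fun x x' hxx k h => lockEnc_traceDist_eq_one U hB (hU k) hxx h, ?_⟩
  intro m ξ e _ he _ i hpos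
  have hunit : ∑ p, ‖e i p‖ ^ 2 = 1 := by rw [← EuclideanSpace.norm_sq_eq, he i, one_pow]
  have hsum : ∑ x, lockProb dA dB t m U ξ e i x = ξ i / (dA * t * dB) * t := by
    simp only [lockProb_eq, ← Finset.mul_sum]
    rw [Finset.sum_comm]
    simp [sum_probA_of_mem_unitaryGroup (hU _), hunit]
  have hCt : ξ i / (dA * t * dB) * t ≠ 0 := hsum ▸ hpos.ne'
  have hposterior : ∀ x, lockProb dA dB t m U ξ e i x / ∑ x', lockProb dA dB t m U ξ e i x'
      = 1 / t * ∑ k, probA (U k) (e i) x := fun x => by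
    rw [hsum, lockProb_eq, mul_div_mul_left _ _ (left_ne_zero_of_mul hCt)]
    ring
  have hmean := Finset.sum_abs_mean_sub_le (by simpa using right_ne_zero_of_mul hCt)
    (fun k => probA (U k) (e i)) (fun _ => 1 / (dA : ℝ))
  rw [Fintype.card_fin] at hmean
  calc (1 / 2) * ∑ x, |lockProb dA dB t m U ξ e i x / (∑ x', lockProb dA dB t m U ξ e i x')
          - 1 / (dA : ℝ)|
      ≤ (1 / 2) * ((1 / t) * ∑ k, ∑ a, |probA (U k) (e i) a - 1 / dA|) := by
        simp only [hposterior]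
        exact mul_le_mul_of_nonneg_left hmean (by norm_num)
    _ = (1 / t) * ∑ k, (1 / 2) * ∑ a, |probA (U k) (e i) a - 1 / dA| := by
        rw [← Finset.mul_sum]
        ring
    _ ≤ ε := hMUR (e i) (he i)
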